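/- Let a2 be a real number with 0 < a2 < 1 and a2 != 1/2, and let a6 be a real number. Set R := 1/(2*a2), a4 := (1/3)*a2^2*(4*a2 - 1), and J := -12*(2*a2^6 + 4*a2^3*a4 - 36*a4^2 + 15*a2*a6)/a2^3. Then J = (2*R - 1)^2*(5*R - 1)/((R - 1)*R^3) if and only if a6 = 2*a2^3*(-1 + 46*a2 - 168*a2^2 + 168*a2^3)/(45*(2*a2 - 1)). -/

import Mathlib

/-!
Once `τ₁ = 0` fixes `a4`, the quantity `J` is affine in `a6` with slope `-180 / a2²`, while the
`τ₂`-threshold depends on `a2` alone through `R = 1 / (2 a2)`, and is finite because `R ≠ 1`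
exactly when `a2 ≠ 1/2`. So `J` equals the threshold for exactly one value of `a6`, which
clearing denominators identifies.
-/

lemma radius_fourthDeriv_eq_of_tau1_eq_zero {a a4 a6 : ℝ} (ha : a ≠ 0)
    (ha4 : a4 = (1 / 3) * a ^ 2 * (4 * a - 1)) :
    -12 * (2 * a ^ 6 + 4 * a ^ 3 * a4 - 36 * a4 ^ 2 + 15 * a * a6) / a ^ 3
      = 4 * a * (170 * a ^ 2 - 92 * a + 12) - 180 * a6 / a ^ 2 := by
  subst ha4
  field_simp
  ring

lemma tau2_threshold_eq {a R : ℝ} (ha : a ≠ 0) (ha' : 2 * a ≠ 1) (hR : R = 1 / (2 * a)) :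
    (2 * R - 1) ^ 2 * (5 * R - 1) / ((R - 1) * R ^ 3)
      = 8 * a * (1 - a) ^ 2 * (2 * a - 5) / (2 * a - 1) := by
  subst hR
  field_simp
  ring

lemma tau2_defect_eq {a a4 a6 R : ℝ} (ha : a ≠ 0) (ha' : 2 * a ≠ 1)
    (hR : R = 1 / (2 * a)) (ha4 : a4 = (1 / 3) * a ^ 2 * (4 * a - 1)) :
    -12 * (2 * a ^ 6 + 4 * a ^ 3 * a4 - 36 * a4 ^ 2 + 15 * a * a6) / a ^ 3
        - (2 * R - 1) ^ 2 * (5 * R - 1) / ((R - 1) * R ^ 3)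
      = -(180 / a ^ 2) * (a6 - 2 * a ^ 3 * (-1 + 46 * a - 168 * a ^ 2 + 168 * a ^ 3)
        / (45 * (2 * a - 1))) := by
  -- `field_simp` recognises the denominator `2 * a - 1` only in its normal form `a * 2 - 1`
  have ha'' : a * 2 - 1 ≠ 0 := by
    contrapose! ha'
    linarith
  rw [radius_fourthDeriv_eq_of_tau1_eq_zero ha ha4, tau2_threshold_eq ha ha' hR]
  field_simp
  ring

theorem tau2_vanishing_characterization (a2 a6 : ℝ)
    (h0 : 0 < a2) (hne : a2 ≠ 1 / 2)
    (R a4 J : ℝ) (hR : R = 1 / (2 * a2)) (ha4 : a4 = (1 / 3) * a2 ^ 2 * (4 * a2 - 1))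
    (hJ : J = -12 * (2 * a2 ^ 6 + 4 * a2 ^ 3 * a4 - 36 * a4 ^ 2 + 15 * a2 * a6) / a2 ^ 3) :
    J = (2 * R - 1) ^ 2 * (5 * R - 1) / ((R - 1) * R ^ 3) ↔
      a6 = 2 * a2 ^ 3 * (-1 + 46 * a2 - 168 * a2 ^ 2 + 168 * a2 ^ 3)
        / (45 * (2 * a2 - 1)) := by
  have ha2 : a2 ≠ 0 := h0.ne'
  have ha2' : 2 * a2 ≠ 1 := by
    contrapose! hne
    linarith
  rw [← sub_eq_zero, hJ, tau2_defect_eq ha2 ha2' hR ha4, mul_eq_zero, sub_eq_zero,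
    or_iff_right (neg_ne_zero.2 (by positivity))]
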